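/- For the diagonal 2×2 operator matrix diag(T,T) on H ⊕ H, dw(diag(T,T)) ≤ √2·(w(T)² + ‖T‖⁴)^{1/2}. -/

import Mathlib

/-!
A unit vector `x = (x₁, x₂)` of `H ⊕ H` has `‖x₁‖² + ‖x₂‖² = 1`, so
`⟪diag(T,T) x, x⟫ = ⟪T x₁, x₁⟫ + ⟪T x₂, x₂⟫` has modulus at most `w(T)`, and
`‖diag(T,T) x‖ ≤ ‖T‖`. Hence `dw(diag(T,T)) ≤ (w(T)² + ‖T‖⁴)^{1/2}`, and the factor `√2 ≥ 1`
is slack.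
-/

open scoped InnerProductSpace

variable {H : Type*} [NormedAddCommGroup H] [InnerProductSpace ℂ H] [CompleteSpace H]

noncomputable def numRadius {E : Type*} [NormedAddCommGroup E] [InnerProductSpace ℂ E]
    (S : E →L[ℂ] E) : ℝ :=
  ⨆ x : {x : E // ‖x‖ = 1}, ‖(⟪S x.1, x.1⟫_ℂ : ℂ)‖

noncomputable def dwRadius {E : Type*} [NormedAddCommGroup E] [InnerProductSpace ℂ E]
    (S : E →L[ℂ] E) : ℝ :=
  ⨆ x : {x : E // ‖x‖ = 1}, Real.sqrt (‖(⟪S x.1, x.1⟫_ℂ : ℂ)‖ ^ 2 + ‖S x.1‖ ^ 4)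

/-- The 2×2 block operator matrix `[[T₁₁, T₁₂], [T₂₁, T₂₂]]` on `H ⊕ H`. -/
noncomputable def blockOp2 (T₁₁ T₁₂ T₂₁ T₂₂ : H →L[ℂ] H) :
    WithLp 2 (H × H) →L[ℂ] WithLp 2 (H × H) :=
  ((WithLp.prodContinuousLinearEquiv 2 ℂ H H).symm : H × H →L[ℂ] WithLp 2 (H × H)) ∘L
    ((T₁₁ ∘L ContinuousLinearMap.fst ℂ H H + T₁₂ ∘L ContinuousLinearMap.snd ℂ H H).prod
      (T₂₁ ∘L ContinuousLinearMap.fst ℂ H H + T₂₂ ∘L ContinuousLinearMap.snd ℂ H H)) ∘L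
    ((WithLp.prodContinuousLinearEquiv 2 ℂ H H) : WithLp 2 (H × H) →L[ℂ] H × H)

section Radii

variable {E : Type*} [NormedAddCommGroup E] [InnerProductSpace ℂ E]

lemma norm_inner_apply_self_le_opNorm (S : E →L[ℂ] E) {x : E} (hx : ‖x‖ = 1) :
    ‖⟪S x, x⟫_ℂ‖ ≤ ‖S‖ :=
  calc ‖⟪S x, x⟫_ℂ‖ ≤ ‖S x‖ * ‖x‖ := norm_inner_le_norm _ _
    _ ≤ ‖S‖ * ‖x‖ * ‖x‖ := by gcongr; exact S.le_opNorm x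
    _ = ‖S‖ := by rw [hx, mul_one, mul_one]

lemma numRadius_nonneg (S : E →L[ℂ] E) : 0 ≤ numRadius S :=
  Real.iSup_nonneg fun _ => norm_nonneg _

lemma norm_inner_apply_self_le_numRadius (S : E →L[ℂ] E) {x : E} (hx : ‖x‖ = 1) :
    ‖⟪S x, x⟫_ℂ‖ ≤ numRadius S :=
  le_ciSup (f := fun x : {x : E // ‖x‖ = 1} => ‖⟪S x.1, x.1⟫_ℂ‖)
    ⟨‖S‖, by rintro _ ⟨y, rfl⟩; exact norm_inner_apply_self_le_opNorm S y.2⟩ ⟨x, hx⟩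

lemma norm_inner_apply_self_le_numRadius_mul_sq (S : E →L[ℂ] E) (x : E) :
    ‖⟪S x, x⟫_ℂ‖ ≤ numRadius S * ‖x‖ ^ 2 := by
  rcases eq_or_ne x 0 with rfl | hx
  · simp
  set u := (‖x‖ : ℂ)⁻¹ • x
  have hxu : x = (‖x‖ : ℂ) • u := by simp [u, smul_smul, norm_ne_zero_iff.2 hx]
  have hu : ‖u‖ = 1 := by simp [u, norm_smul, norm_ne_zero_iff.2 hx]
  have hscale : ‖⟪S x, x⟫_ℂ‖ = ‖x‖ ^ 2 * ‖⟪S u, u⟫_ℂ‖ := by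
    conv_lhs => rw [hxu]
    simp [sq, mul_assoc]
  rw [hscale, mul_comm (numRadius S)]
  gcongr
  exact norm_inner_apply_self_le_numRadius S hu

lemma dwRadius_le_sqrt_numRadius_sq_add_opNorm_pow_four (S : E →L[ℂ] E) :
    dwRadius S ≤ √(numRadius S ^ 2 + ‖S‖ ^ 4) := by
  refine Real.iSup_le (fun ⟨x, hx⟩ => ?_) (Real.sqrt_nonneg _)
  have hSx : ‖S x‖ ≤ ‖S‖ := by simpa [hx] using S.le_opNorm x
  gcongr
  exact norm_inner_apply_self_le_numRadius S hx

end Radii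

section BlockDiagonal

variable {F : Type*} [NormedAddCommGroup F] [InnerProductSpace ℂ F]

@[simp]
lemma blockOp2_apply_fst (A B C D : F →L[ℂ] F) (x : WithLp 2 (F × F)) :
    (blockOp2 A B C D x).fst = A x.fst + B x.snd := by
  simp [blockOp2]

@[simp]
lemma blockOp2_apply_snd (A B C D : F →L[ℂ] F) (x : WithLp 2 (F × F)) :
    (blockOp2 A B C D x).snd = C x.fst + D x.snd := by
  simp [blockOp2]

lemma numRadius_blockOp2_diag_le (T : F →L[ℂ] F) :
    numRadius (blockOp2 T 0 0 T) ≤ numRadius T := by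
  refine Real.iSup_le (fun ⟨x, hx⟩ => ?_) (numRadius_nonneg T)
  have hx2 : ‖x.fst‖ ^ 2 + ‖x.snd‖ ^ 2 = 1 := by
    rw [← WithLp.prod_norm_sq_eq_of_L2, hx, one_pow]
  calc ‖⟪blockOp2 T 0 0 T x, x⟫_ℂ‖
      = ‖⟪T x.fst, x.fst⟫_ℂ + ⟪T x.snd, x.snd⟫_ℂ‖ := by
        rw [WithLp.prod_inner_apply]
        simp
    _ ≤ ‖⟪T x.fst, x.fst⟫_ℂ‖ + ‖⟪T x.snd, x.snd⟫_ℂ‖ := norm_add_le _ _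
    _ ≤ numRadius T * ‖x.fst‖ ^ 2 + numRadius T * ‖x.snd‖ ^ 2 := by
        gcongr <;> exact norm_inner_apply_self_le_numRadius_mul_sq T _
    _ = numRadius T := by rw [← mul_add, hx2, mul_one]

lemma opNorm_blockOp2_diag_le (T : F →L[ℂ] F) : ‖blockOp2 T 0 0 T‖ ≤ ‖T‖ := by
  refine ContinuousLinearMap.opNorm_le_bound _ (norm_nonneg T) fun x => ?_
  refine le_of_sq_le_sq ?_ (by positivity)
  calc ‖blockOp2 T 0 0 T x‖ ^ 2 = ‖T x.fst‖ ^ 2 + ‖T x.snd‖ ^ 2 := by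
        rw [WithLp.prod_norm_sq_eq_of_L2]
        simp
    _ ≤ (‖T‖ * ‖x.fst‖) ^ 2 + (‖T‖ * ‖x.snd‖) ^ 2 := by gcongr <;> exact T.le_opNorm _
    _ = (‖T‖ * ‖x‖) ^ 2 := by rw [mul_pow, mul_pow, mul_pow, WithLp.prod_norm_sq_eq_of_L2]; ring

end BlockDiagonal

theorem dw_blockDiag_same_le (T : H →L[ℂ] H) :
    dwRadius (blockOp2 T 0 0 T) ≤ Real.sqrt 2 * (numRadius T ^ 2 + ‖T‖ ^ 4) ^ ((1 : ℝ) / 2) := by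
  have hw := numRadius_blockOp2_diag_le T
  have hnorm := opNorm_blockOp2_diag_le T
  have hw₀ := numRadius_nonneg (blockOp2 T 0 0 T)
  calc dwRadius (blockOp2 T 0 0 T)
      ≤ √(numRadius (blockOp2 T 0 0 T) ^ 2 + ‖blockOp2 T 0 0 T‖ ^ 4) :=
        dwRadius_le_sqrt_numRadius_sq_add_opNorm_pow_four _
    _ ≤ √(numRadius T ^ 2 + ‖T‖ ^ 4) := by gcongr
    _ = (numRadius T ^ 2 + ‖T‖ ^ 4) ^ ((1 : ℝ) / 2) := Real.sqrt_eq_rpow _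
    _ ≤ √2 * (numRadius T ^ 2 + ‖T‖ ^ 4) ^ ((1 : ℝ) / 2) :=
        le_mul_of_one_le_left (by positivity) (Real.one_le_sqrt.2 one_le_two)
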